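/- Let Ω ⊆ ℝⁿ be bounded, open, convex. If Ω is strictly convex, then for any x, y ∈ Ω and z ∈ Ω with d_Ω(x,z) + d_Ω(z,y) = d_Ω(x,y), the point z lies on the segment [x,y]. -/

import Mathlib

open Metric Set Filter

/-- Cross-ratio of four collinear points, via Euclidean norms. -/
noncomputable def crossRatio {n : ℕ} (a x y b : EuclideanSpace ℝ (Fin n)) : ℝ :=
  (‖y - a‖ * ‖x - b‖) / (‖y - b‖ * ‖x - a‖)

/-- `a, b` are the endpoints of the chord of `Ω` through `x, y`, in the order `a, x, y, b`. -/
def IsChord {n : ℕ} (Ω : Set (EuclideanSpace ℝ (Fin n)))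
    (x y a b : EuclideanSpace ℝ (Fin n)) : Prop :=
  a ∈ frontier Ω ∧ b ∈ frontier Ω ∧ x ∈ openSegment ℝ a y ∧ y ∈ openSegment ℝ x b

/-- `d` is the Hilbert distance on `Ω`. -/
def IsHilbertDist {n : ℕ} (Ω : Set (EuclideanSpace ℝ (Fin n)))
    (d : EuclideanSpace ℝ (Fin n) → EuclideanSpace ℝ (Fin n) → ℝ) : Prop :=
  (∀ x ∈ Ω, d x x = 0) ∧
  ∀ x ∈ Ω, ∀ y ∈ Ω, x ≠ y → ∃ a b, IsChord Ω x y a b ∧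
    d x y = (1 / 2) * Real.log (crossRatio a x y b)

/-- `Ω` is strictly convex: every supporting hyperplane meets `cl(Ω)` in exactly one point. -/
def IsStrictlyConvexDomain {n : ℕ} (Ω : Set (EuclideanSpace ℝ (Fin n))) : Prop :=
  ∀ ξ ∈ frontier Ω, ∀ f : EuclideanSpace ℝ (Fin n) →L[ℝ] ℝ, f ≠ 0 →
    (∀ y ∈ Ω, f y ≤ f ξ) → ∀ z ∈ closure Ω, f z = f ξ → z = ξ

lemma funk_aux {E : Type*} [NormedAddCommGroup E] [NormedSpace ℝ E]
    (f : E →L[ℝ] ℝ) (c : ℝ) {p q b : E}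
    (hp : f p < c) (hq : f q < c) (hb : f b ≤ c) (hpb : p ≠ b)
    (hseg : q ∈ openSegment ℝ p b) :
    Real.log (c - f p) - Real.log (c - f q) ≤ Real.log ‖p - b‖ - Real.log ‖q - b‖ ∧
    (Real.log (c - f p) - Real.log (c - f q) = Real.log ‖p - b‖ - Real.log ‖q - b‖ ↔ f b = c) := by
  obtain ⟨u, t, hu, ht, hut, hq'⟩ := hseg
  have hqb : q - b = u • (p - b) := by
    have h1 : t = 1 - u := by linarith
    rw [← hq', h1]; module
  have hP1 : 0 < ‖p - b‖ := by rwa [norm_sub_pos_iff]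
  have hQ1 : ‖q - b‖ = u * ‖p - b‖ := by
    rw [hqb, norm_smul, Real.norm_eq_abs, abs_of_pos hu]
  have hfq : c - f q = u * (c - f p) + t * (c - f b) := by
    have h2 : f q = u * f p + t * f b := by
      rw [← hq']; simp [map_add, map_smul, smul_eq_mul]
    rw [h2]; linear_combination (-c) * hut
  have hP2 : 0 < c - f p := by linarith
  have hQ2 : 0 < c - f q := by linarith
  have hkey : ‖p - b‖ * (c - f q) - ‖q - b‖ * (c - f p) = ‖p - b‖ * t * (c - f b) := by
    rw [hQ1, hfq]; ring
  have hcb : 0 ≤ c - f b := by linarith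
  have htb : 0 ≤ ‖p - b‖ * t * (c - f b) := mul_nonneg (mul_nonneg hP1.le ht.le) hcb
  have hQ1pos : 0 < ‖q - b‖ := by rw [hQ1]; exact mul_pos hu hP1
  have hle : ‖q - b‖ * (c - f p) ≤ ‖p - b‖ * (c - f q) := by linarith
  have hlog : Real.log (‖q - b‖ * (c - f p)) ≤ Real.log (‖p - b‖ * (c - f q)) :=
    Real.log_le_log (by positivity) hle
  rw [Real.log_mul hQ1pos.ne' hP2.ne', Real.log_mul hP1.ne' hQ2.ne'] at hlog
  refine ⟨by linarith, ?_, ?_⟩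
  · intro heq
    have h3 : Real.log (‖q - b‖ * (c - f p)) = Real.log (‖p - b‖ * (c - f q)) := by
      rw [Real.log_mul hQ1pos.ne' hP2.ne', Real.log_mul hP1.ne' hQ2.ne']; linarith
    have h4 := congrArg Real.exp h3
    rw [Real.exp_log (by positivity), Real.exp_log (by positivity)] at h4
    have h5 : ‖p - b‖ * t * (c - f b) = 0 := by linarith
    rcases mul_eq_zero.mp h5 with h | h
    · exact absurd h (mul_pos hP1 ht).ne'
    · linarith
  · intro heq
    have h6 : ‖p - b‖ * t * (c - f b) = 0 := by rw [heq]; ring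
    have hprod : ‖q - b‖ * (c - f p) = ‖p - b‖ * (c - f q) := by linarith
    have h7 := congrArg Real.log hprod
    rw [Real.log_mul hQ1pos.ne' hP2.ne', Real.log_mul hP1.ne' hQ2.ne'] at h7
    linarith

lemma log_crossRatio {n : ℕ} {a x y b : EuclideanSpace ℝ (Fin n)}
    (h1 : y ≠ a) (h2 : x ≠ b) (h3 : y ≠ b) (h4 : x ≠ a) :
    Real.log (crossRatio a x y b) =
      (Real.log ‖x - b‖ - Real.log ‖y - b‖) + (Real.log ‖y - a‖ - Real.log ‖x - a‖) := by
  have p1 : 0 < ‖y - a‖ := by rwa [norm_sub_pos_iff]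
  have p2 : 0 < ‖x - b‖ := by rwa [norm_sub_pos_iff]
  have p3 : 0 < ‖y - b‖ := by rwa [norm_sub_pos_iff]
  have p4 : 0 < ‖x - a‖ := by rwa [norm_sub_pos_iff]
  unfold crossRatio
  rw [Real.log_div (by positivity) (by positivity), Real.log_mul p1.ne' p2.ne',
    Real.log_mul p3.ne' p4.ne']
  ring

set_option maxHeartbeats 1000000 in
theorem strictly_convex_geodesics_are_segments {n : ℕ} (Ω : Set (EuclideanSpace ℝ (Fin n)))
    (hbdd : Bornology.IsBounded Ω) (hopen : IsOpen Ω) (hconv : Convex ℝ Ω)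
    (hsc : IsStrictlyConvexDomain Ω)
    (d : EuclideanSpace ℝ (Fin n) → EuclideanSpace ℝ (Fin n) → ℝ)
    (hd : IsHilbertDist Ω d) :
    ∀ x ∈ Ω, ∀ y ∈ Ω, ∀ z ∈ Ω, d x z + d z y = d x y → z ∈ segment ℝ x y := by
  obtain ⟨hd0, hdne⟩ := hd
  have hne : ∀ w ∈ Ω, ∀ e ∈ frontier Ω, w ≠ e := by
    intro w hw e he hwe
    rw [hopen.frontier_eq] at he
    exact he.2 (hwe ▸ hw)
  have hdpos : ∀ p ∈ Ω, ∀ q ∈ Ω, p ≠ q → 0 < d p q := by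
    intro p hp q hq hpq
    obtain ⟨a, b, ⟨haf, hbf, hpseg, hqseg⟩, hform⟩ := hdne p hp q hq hpq
    obtain ⟨u, v, hu, hv, huv, hpe⟩ := hpseg
    obtain ⟨u', v', hu', hv', huv', hqe⟩ := hqseg
    have hqa : 0 < ‖q - a‖ := by rw [norm_sub_pos_iff]; exact hne q hq a haf
    have hpb : 0 < ‖p - b‖ := by rw [norm_sub_pos_iff]; exact hne p hp b hbf
    have hpa : p - a = v • (q - a) := by
      have hv1 : u = 1 - v := by linarith
      rw [← hpe, hv1]; module
    have hqb : q - b = u' • (p - b) := by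
      have hv2 : v' = 1 - u' := by linarith
      rw [← hqe, hv2]; module
    have h1 : ‖p - a‖ = v * ‖q - a‖ := by
      rw [hpa, norm_smul, Real.norm_eq_abs, abs_of_pos hv]
    have h2 : ‖q - b‖ = u' * ‖p - b‖ := by
      rw [hqb, norm_smul, Real.norm_eq_abs, abs_of_pos hu']
    have hCR : 1 < crossRatio a p q b := by
      unfold crossRatio
      rw [lt_div_iff₀ (by rw [h1, h2]; positivity)]
      rw [h1, h2]
      have hv1 : v < 1 := by linarith
      have hu1 : u' < 1 := by linarith
      have h3 : u' * v < 1 := by nlinarith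
      have h4 := mul_pos (sub_pos.mpr h3) (mul_pos hqa hpb)
      nlinarith [h4]
    rw [hform]
    have := Real.log_pos hCR
    linarith
  intro x hx y hy z hz heq
  by_cases hzx : z = x
  · subst hzx; exact left_mem_segment ℝ z y
  by_cases hzy : z = y
  · subst hzy; exact right_mem_segment ℝ x z
  by_cases hxy : x = y
  · exfalso
    subst hxy
    have h1 := hdpos x hx z hz (Ne.symm hzx)
    have h2 := hdpos z hz x hx hzx
    have h3 := hd0 x hx
    linarith
  have hxz : x ≠ z := Ne.symm hzx
  obtain ⟨a, b, ⟨haf, hbf, hxA, hyB⟩, hdxy⟩ := hdne x hx y hy hxy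
  obtain ⟨a₁, b₁, ⟨ha1f, hb1f, hxA1, hzB1⟩, hdxz⟩ := hdne x hx z hz hxz
  obtain ⟨a₂, b₂, ⟨ha2f, hb2f, hzA2, hyB2⟩, hdzy⟩ := hdne z hz y hy hzy
  have hbΩ : b ∉ Ω := fun h => hne b h b hbf rfl
  have haΩ : a ∉ Ω := fun h => hne a h a haf rfl
  obtain ⟨f, hf⟩ := geometric_hahn_banach_open_point hconv hopen hbΩ
  obtain ⟨g, hg⟩ := geometric_hahn_banach_open_point hconv hopen haΩ
  have hfcl : ∀ w ∈ closure Ω, f w ≤ f b :=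
    fun w hw => (closure_minimal (fun v hv => (hf v hv).le)
      (isClosed_le f.continuous continuous_const)) hw
  have hgcl : ∀ w ∈ closure Ω, g w ≤ g a :=
    fun w hw => (closure_minimal (fun v hv => (hg v hv).le)
      (isClosed_le g.continuous continuous_const)) hw
  -- funk applications, f-side (forward endpoints b, b₁, b₂)
  have Fxy := funk_aux f (f b) (hf x hx) (hf y hy) le_rfl (hne x hx b hbf) hyB
  have Fxz := funk_aux f (f b) (hf x hx) (hf z hz) (hfcl b₁ (frontier_subset_closure hb1f))
    (hne x hx b₁ hb1f) hzB1
  have Fzy := funk_aux f (f b) (hf z hz) (hf y hy) (hfcl b₂ (frontier_subset_closure hb2f))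
    (hne z hz b₂ hb2f) hyB2
  -- g-side (forward endpoints a, a₂, a₁), reversed segments
  have hxA' : x ∈ openSegment ℝ y a := by rwa [openSegment_symm] at hxA
  have hzA2' : z ∈ openSegment ℝ y a₂ := by rwa [openSegment_symm] at hzA2
  have hxA1' : x ∈ openSegment ℝ z a₁ := by rwa [openSegment_symm] at hxA1
  have Gyx := funk_aux g (g a) (hg y hy) (hg x hx) le_rfl (hne y hy a haf) hxA'
  have Gyz := funk_aux g (g a) (hg y hy) (hg z hz) (hgcl a₂ (frontier_subset_closure ha2f))
    (hne y hy a₂ ha2f) hzA2'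
  have Gzx := funk_aux g (g a) (hg z hz) (hg x hx) (hgcl a₁ (frontier_subset_closure ha1f))
    (hne z hz a₁ ha1f) hxA1'
  have Exy := Fxy.2.mpr rfl
  have Eyx := Gyx.2.mpr rfl
  have hCRxy := log_crossRatio (hne y hy a haf) (hne x hx b hbf) (hne y hy b hbf) (hne x hx a haf)
  have hCRxz := log_crossRatio (hne z hz a₁ ha1f) (hne x hx b₁ hb1f) (hne z hz b₁ hb1f)
    (hne x hx a₁ ha1f)
  have hCRzy := log_crossRatio (hne y hy a₂ ha2f) (hne z hz b₂ hb2f) (hne y hy b₂ hb2f)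
    (hne z hz a₂ ha2f)
  rw [hCRxy] at hdxy
  rw [hCRxz] at hdxz
  rw [hCRzy] at hdzy
  have E1 : Real.log (f b - f x) - Real.log (f b - f z) = Real.log ‖x - b₁‖ - Real.log ‖z - b₁‖ :=
    le_antisymm Fxz.1 (by linarith only [heq, hdxy, hdxz, hdzy, Exy, Eyx, Fxz.1, Fzy.1, Gyz.1, Gzx.1])
  have E2 : Real.log (f b - f z) - Real.log (f b - f y) = Real.log ‖z - b₂‖ - Real.log ‖y - b₂‖ :=
    le_antisymm Fzy.1 (by linarith only [heq, hdxy, hdxz, hdzy, Exy, Eyx, Fxz.1, Fzy.1, Gyz.1, Gzx.1])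
  have hfb1 : f b₁ = f b := Fxz.2.mp E1
  have hfb2 : f b₂ = f b := Fzy.2.mp E2
  have hf0 : f ≠ 0 := by
    intro h
    have := hf x hx
    rw [h] at this
    simp at this
  have hb1 : b₁ = b := hsc b hbf f hf0 (fun w hw => (hf w hw).le) b₁
    (frontier_subset_closure hb1f) hfb1
  have hb2 : b₂ = b := hsc b hbf f hf0 (fun w hw => (hf w hw).le) b₂
    (frontier_subset_closure hb2f) hfb2
  rw [hb1] at hzB1
  rw [hb2] at hyB2
  obtain ⟨u, v, hu, hv, huv, hz1⟩ := hzB1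
  obtain ⟨u', v', hu', hv', huv', hy1⟩ := hyB2
  have hwpos : 0 < u' * v + v' := by nlinarith
  have key : (u' * v + v') • z = (v' * u) • x + v • y := by
    have e2 : v • y = (v * u') • z + (v * v') • b := by
      rw [← hy1, smul_add, smul_smul, smul_smul]
    have e1 : v' • z = (v' * u) • x + (v' * v) • b := by
      rw [← hz1, smul_add, smul_smul, smul_smul]
    rw [add_smul, e2, e1]
    module
  refine ⟨v' * u / (u' * v + v'), v / (u' * v + v'),
    le_of_lt (div_pos (mul_pos hv' hu) hwpos), le_of_lt (div_pos hv hwpos), ?_, ?_⟩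
  · rw [← add_div, div_eq_one_iff_eq hwpos.ne']
    linear_combination v' * huv - v * huv'
  · have h8 : (v' * u / (u' * v + v')) • x + (v / (u' * v + v')) • y =
        (u' * v + v')⁻¹ • ((u' * v + v') • z) := by
      rw [key, smul_add, smul_smul, smul_smul, div_eq_inv_mul, div_eq_inv_mul]
    rw [h8, smul_smul, inv_mul_cancel₀ hwpos.ne', one_smul]
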